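/- Let J be skew-symmetric, Q positive semidefinite, and R positive definite (all n×n real matrices). Then (J − R)Q has no nonzero purely imaginary eigenvalues. -/

import Mathlib

/-!
Let `(A * Q) v = μ v` with `v ≠ 0` and put `w = Q v`. Then `w* A w = μ (v* Q v)`, and `v* Q v` is
real because `Q` is Hermitian. For `A = J - R` and `w = a + i b`, the real part of `w* A w` is
`-(aᵀ R a + bᵀ R b)`, which is negative unless `w = 0`. So either `Re μ ≠ 0`, or `w = 0`, in which
case `μ v = 0` forces `μ = 0`.
-/

open Matrix

namespace Matrix

variable {n : Type*} [Fintype n]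

theorem exists_mulVec_eq_smul_of_mem_spectrum {K : Type*} [Field K] [DecidableEq n]
    {A : Matrix n n K} {μ : K} (hμ : μ ∈ spectrum K A) :
    ∃ v ≠ 0, A *ᵥ v = μ • v := by
  rw [← spectrum_toLin', ← Module.End.hasEigenvalue_iff_mem_spectrum] at hμ
  obtain ⟨v, hv⟩ := hμ.exists_hasEigenvector
  exact ⟨v, hv.2, by simpa using Module.End.mem_eigenspace_iff.mp hv.1⟩

theorem dotProduct_mulVec_self_eq_zero_of_transpose_eq_neg {R : Type*} [CommRing R]
    [NoZeroDivisors R] [CharZero R] {J : Matrix n n R} (hJ : Jᵀ = -J) (a : n → R) :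
    a ⬝ᵥ J *ᵥ a = 0 :=
  self_eq_neg.mp <| calc
    a ⬝ᵥ J *ᵥ a = a ᵥ* Jᵀ ⬝ᵥ a := by rw [vecMul_transpose, dotProduct_comm]
    _ = -(a ⬝ᵥ J *ᵥ a) := by rw [hJ, vecMul_neg, neg_dotProduct, dotProduct_mulVec]

theorem re_star_dotProduct_map_ofReal_mulVec (M : Matrix n n ℝ) (x : n → ℂ) :
    (star x ⬝ᵥ M.map (Complex.ofReal ·) *ᵥ x).re
      = (Complex.re ∘ x) ⬝ᵥ M *ᵥ (Complex.re ∘ x) + (Complex.im ∘ x) ⬝ᵥ M *ᵥ (Complex.im ∘ x) := by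
  simp only [dotProduct, mulVec, map_apply, Pi.star_apply, Complex.re_sum, Function.comp_apply,
    Finset.mul_sum, ← Finset.sum_add_distrib]
  refine Finset.sum_congr rfl fun i _ => Finset.sum_congr rfl fun j _ => ?_
  simp only [Complex.mul_re, Complex.mul_im, Complex.ofReal_re, Complex.ofReal_im,
    Complex.star_def, Complex.conj_re, Complex.conj_im]
  ring

theorem re_star_dotProduct_map_ofReal_sub_mulVec_lt_zero {J R : Matrix n n ℝ} (hJ : Jᵀ = -J)
    (hR : R.PosDef) {x : n → ℂ} (hx : x ≠ 0) :
    (star x ⬝ᵥ (J - R).map (Complex.ofReal ·) *ᵥ x).re < 0 := by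
  have hx' : Complex.re ∘ x ≠ 0 ∨ Complex.im ∘ x ≠ 0 := by
    contrapose! hx
    funext i
    exact Complex.ext (congrFun hx.1 i) (congrFun hx.2 i)
  have hRnonneg (a : n → ℝ) : 0 ≤ a ⬝ᵥ R *ᵥ a := by
    simpa using hR.posSemidef.dotProduct_mulVec_nonneg a
  have hRpos {a : n → ℝ} (ha : a ≠ 0) : 0 < a ⬝ᵥ R *ᵥ a := by
    simpa using hR.dotProduct_mulVec_pos ha
  simp only [re_star_dotProduct_map_ofReal_mulVec, sub_mulVec, dotProduct_sub,
    dotProduct_mulVec_self_eq_zero_of_transpose_eq_neg hJ]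
  rcases hx' with h | h
  · linarith [hRpos h, hRnonneg (Complex.im ∘ x)]
  · linarith [hRpos h, hRnonneg (Complex.re ∘ x)]

theorem re_ne_zero_of_mem_spectrum_mul [DecidableEq n] {A Q : Matrix n n ℂ}
    (hA : ∀ x ≠ 0, (star x ⬝ᵥ A *ᵥ x).re < 0) (hQ : Q.IsHermitian) {μ : ℂ}
    (hμ : μ ∈ spectrum ℂ (A * Q)) (hμ0 : μ ≠ 0) : μ.re ≠ 0 := by
  obtain ⟨v, hv, hAQv⟩ := exists_mulVec_eq_smul_of_mem_spectrum hμ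
  rw [← mulVec_mulVec] at hAQv
  set w := Q *ᵥ v
  have hw : w ≠ 0 := by
    intro hw
    rw [hw, mulVec_zero] at hAQv
    exact (smul_eq_zero.mp hAQv.symm).elim hμ0 hv
  have hQv : (star v ⬝ᵥ Q *ᵥ v).im = 0 := hQ.im_star_dotProduct_mulVec_self v
  have hwAw : star w ⬝ᵥ A *ᵥ w = μ * (star v ⬝ᵥ Q *ᵥ v) := by
    rw [hAQv, dotProduct_smul, smul_eq_mul, star_mulVec, hQ.eq, ← dotProduct_mulVec]
  intro hre
  have := hA w hw
  rw [hwAw, Complex.mul_re, hre, hQv] at this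
  simp at this

end Matrix

/-- If J is skew-symmetric, Q ⪰ 0 and R ≻ 0, then (J − R)Q has no nonzero
purely imaginary eigenvalues. -/
theorem dh_no_nonzero_imaginary_eigs {n : ℕ} (J Q R : Matrix (Fin n) (Fin n) ℝ)
    (hJ : Jᵀ = -J) (hQ : Q.PosSemidef) (hR : R.PosDef) :
    ∀ ω : ℝ, ω ≠ 0 →
      (Complex.I * ω) ∉ spectrum ℂ (((J - R) * Q).map (Complex.ofReal ·)) := by
  intro ω hω hmem
  have hQc : (Q.map (Complex.ofReal ·)).IsHermitian :=
    hQ.1.map _ fun x => (Complex.conj_ofReal x).symm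
  have hmul : ((J - R) * Q).map (Complex.ofReal ·)
      = (J - R).map (Complex.ofReal ·) * Q.map (Complex.ofReal ·) :=
    Matrix.map_mul (f := Complex.ofRealHom)
  rw [hmul] at hmem
  exact re_ne_zero_of_mem_spectrum_mul
    (fun _ => re_star_dotProduct_map_ofReal_sub_mulVec_lt_zero hJ hR) hQc hmem
    (by simpa using hω) (by simp)
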